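/- arXiv:2504.07428 — 2 statements merged into one kernel-verified Lean document; each statement's English description precedes it below -/
import Mathlib

section
/- Let V : ℕ → ℝ and define for a fixed action a with step length L > 0, success probability p ∈ (0,1], absorbing reset value r, and uniformization constant ε ∈ (0, L], the state-action value Q(Δ, a) = Δ + (L-1)/2 + (ε/L)·p·V(r) + (ε/L)·(1-p)·V(Δ + L) + (1 - ε/L)·V(Δ). If V is concave (discrete increments non-increasing) and satisfies V(Δ₂) - V(Δ₁) ≥ (L/(ε p))·(Δ₂ - Δ₁) for all Δ₁ ≤ Δ₂, then Q(Δ₂, a) - Q(Δ₁, a) ≤ V(Δ₂) - V(Δ₁) for all Δ₁ ≤ Δ₂. -/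
/- Writing `A = V Δ₂ - V Δ₁`, the difference of the `Q`-values is
`(Δ₂ - Δ₁) + (ε/L)(1-p)(V(Δ₂+L) - V(Δ₁+L)) + (1 - ε/L) A`. Concavity bounds the shifted
difference by `A`, and the slope condition bounds `Δ₂ - Δ₁` by `(ε/L) p A`; the two bounds add
up to `(ε/L) A`. -/

lemma sub_add_le_sub_of_antitone_increments {f : ℕ → ℝ} (hf : Antitone fun n ↦ f (n + 1) - f n)
    {a b : ℕ} (hab : a ≤ b) (k : ℕ) : f (b + k) - f (a + k) ≤ f b - f a := by
  induction k with
  | zero => simp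
  | succ k ih =>
    have := hf (Nat.add_le_add_right hab k)
    rw [← add_assoc, ← add_assoc]
    linarith

theorem Q_diff_le_V_diff_general (V : ℕ → ℝ) (L : ℕ) (hL : 0 < L)
    (p ε : ℝ) (hp0 : 0 < p) (hp1 : p ≤ 1) (hε0 : 0 < ε) (r : ℕ)
    (hconc : ∀ x : ℕ, V (x + 2) - V (x + 1) ≤ V (x + 1) - V x)
    (hslope : ∀ Δ₁ Δ₂ : ℕ, Δ₁ ≤ Δ₂ →
      V Δ₂ - V Δ₁ ≥ ((L : ℝ) / (ε * p)) * ((Δ₂ : ℝ) - (Δ₁ : ℝ))) :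
    ∀ Δ₁ Δ₂ : ℕ, Δ₁ ≤ Δ₂ →
      (((Δ₂ : ℝ) + ((L : ℝ) - 1) / 2 + (ε / L) * p * V r
          + (ε / L) * (1 - p) * V (Δ₂ + L) + (1 - ε / L) * V Δ₂)
        - ((Δ₁ : ℝ) + ((L : ℝ) - 1) / 2 + (ε / L) * p * V r
          + (ε / L) * (1 - p) * V (Δ₁ + L) + (1 - ε / L) * V Δ₁))
        ≤ V Δ₂ - V Δ₁ := by
  intro Δ₁ Δ₂ h12
  have hL' : (0 : ℝ) < L := by exact_mod_cast hL
  have hshift : V (Δ₂ + L) - V (Δ₁ + L) ≤ V Δ₂ - V Δ₁ :=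
    sub_add_le_sub_of_antitone_increments (antitone_nat_of_succ_le hconc) h12 L
  have hgap : (Δ₂ : ℝ) - Δ₁ ≤ ε / L * p * (V Δ₂ - V Δ₁) :=
    calc (Δ₂ : ℝ) - Δ₁ = ε / L * p * ((L : ℝ) / (ε * p) * ((Δ₂ : ℝ) - Δ₁)) := by field_simp
      _ ≤ ε / L * p * (V Δ₂ - V Δ₁) := by gcongr; exact hslope Δ₁ Δ₂ h12
  have hfailure : ε / L * (1 - p) * (V (Δ₂ + L) - V (Δ₁ + L)) ≤ ε / L * (1 - p) * (V Δ₂ - V Δ₁) :=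
    mul_le_mul_of_nonneg_left hshift (mul_nonneg (by positivity) (sub_nonneg.mpr hp1))
  linarith

/-- Key inequality for the threshold structure: differences of the state-action value `Q`
are dominated by differences of the value function `V`. -/
theorem Q_diff_le_V_diff (V : ℕ → ℝ) (L : ℕ) (hL : 0 < L)
    (p ε : ℝ) (hp0 : 0 < p) (hp1 : p ≤ 1) (hε0 : 0 < ε) (hεL : ε ≤ (L : ℝ)) (r : ℕ)
    (hconc : ∀ x : ℕ, V (x + 2) - V (x + 1) ≤ V (x + 1) - V x)
    (hslope : ∀ Δ₁ Δ₂ : ℕ, Δ₁ ≤ Δ₂ →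
      V Δ₂ - V Δ₁ ≥ ((L : ℝ) / (ε * p)) * ((Δ₂ : ℝ) - (Δ₁ : ℝ))) :
    ∀ Δ₁ Δ₂ : ℕ, Δ₁ ≤ Δ₂ →
      (((Δ₂ : ℝ) + ((L : ℝ) - 1) / 2 + (ε / L) * p * V r
          + (ε / L) * (1 - p) * V (Δ₂ + L) + (1 - ε / L) * V Δ₂)
        - ((Δ₁ : ℝ) + ((L : ℝ) - 1) / 2 + (ε / L) * p * V r
          + (ε / L) * (1 - p) * V (Δ₁ + L) + (1 - ε / L) * V Δ₁))
        ≤ V Δ₂ - V Δ₁ :=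
  Q_diff_le_V_diff_general V L hL p ε hp0 hp1 hε0 r hconc hslope
end

section
/- Under the hypotheses of the key inequality — V concave and V(Δ₂) - V(Δ₁) ≥ (L/(ε p))·(Δ₂ - Δ₁) for Δ₁ ≤ Δ₂, and Q(Δ, a) = Δ + (L-1)/2 + (ε/L)·p·V(r) + (ε/L)·(1-p)·V(Δ+L) + (1-ε/L)·V(Δ) — if additionally V(Δ₁) = Q(Δ₁, a) and V(Δ₂) ≤ Q(Δ₂, a) for some Δ₁ ≤ Δ₂, then V(Δ₂) = Q(Δ₂, a). -/
/-! `Q Δ - V Δ` is nonincreasing in `Δ`: on `[Δ₁, Δ₂]` the slope bound makes the gain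
`(ε / L) * p * (V Δ₂ - V Δ₁)` outweigh the cost increase `Δ₂ - Δ₁`, and concavity keeps
`V (Δ + L)` from growing faster than `V Δ`. So `Q - V`, zero at `Δ₁`, is `≤ 0` at `Δ₂`. -/

section ConcaveSequence

variable {V : ℕ → ℝ}

theorem antitone_increment_of_concave (hconc : ∀ x : ℕ, V (x + 2) - V (x + 1) ≤ V (x + 1) - V x) :
    Antitone fun x => V (x + 1) - V x :=
  antitone_nat_of_succ_le hconc

theorem antitone_shift_sub_of_concave
    (hconc : ∀ x : ℕ, V (x + 2) - V (x + 1) ≤ V (x + 1) - V x) (k : ℕ) :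
    Antitone fun x => V (x + k) - V x :=
  antitone_nat_of_succ_le fun x => by
    have hinc := antitone_increment_of_concave hconc (Nat.le_add_right x k)
    simp only [Nat.add_right_comm x 1 k] at hinc ⊢
    linarith

end ConcaveSequence

theorem antitone_sub_of_slope_of_concave (V : ℕ → ℝ) (L : ℕ) (hL : 0 < L)
    (p ε : ℝ) (hp0 : 0 < p) (hp1 : p ≤ 1) (hε0 : 0 < ε) (r : ℕ) (Q : ℕ → ℝ)
    (hQ : ∀ Δ : ℕ, Q Δ = (Δ : ℝ) + ((L : ℝ) - 1) / 2 + (ε / L) * p * V r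
          + (ε / L) * (1 - p) * V (Δ + L) + (1 - ε / L) * V Δ)
    (hconc : ∀ x : ℕ, V (x + 2) - V (x + 1) ≤ V (x + 1) - V x)
    (hslope : ∀ Δ₁ Δ₂ : ℕ, Δ₁ ≤ Δ₂ →
      V Δ₂ - V Δ₁ ≥ ((L : ℝ) / (ε * p)) * ((Δ₂ : ℝ) - (Δ₁ : ℝ))) :
    Antitone fun Δ => Q Δ - V Δ := by
  intro Δ₁ Δ₂ h12
  have hLpos : (0 : ℝ) < L := by exact_mod_cast hL
  have hshift : V (Δ₂ + L) - V (Δ₁ + L) ≤ V Δ₂ - V Δ₁ := by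
    linarith [antitone_shift_sub_of_concave hconc L h12]
  have hgain : (Δ₂ : ℝ) - Δ₁ ≤ ε / L * p * (V Δ₂ - V Δ₁) :=
    calc (Δ₂ : ℝ) - Δ₁ = ε / L * p * ((L : ℝ) / (ε * p) * ((Δ₂ : ℝ) - Δ₁)) := by
          field_simp
      _ ≤ ε / L * p * (V Δ₂ - V Δ₁) := by gcongr; exact hslope Δ₁ Δ₂ h12
  have hcoef : 0 ≤ ε / L * (1 - p) := mul_nonneg (by positivity) (by linarith)
  have hshift' := mul_le_mul_of_nonneg_left hshift hcoef
  simp only [hQ]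
  linarith

theorem threshold_structure_general (V : ℕ → ℝ) (L : ℕ) (hL : 0 < L)
    (p ε : ℝ) (hp0 : 0 < p) (hp1 : p ≤ 1) (hε0 : 0 < ε) (r : ℕ)
    (Q : ℕ → ℝ)
    (hQ : ∀ Δ : ℕ, Q Δ = (Δ : ℝ) + ((L : ℝ) - 1) / 2 + (ε / L) * p * V r
          + (ε / L) * (1 - p) * V (Δ + L) + (1 - ε / L) * V Δ)
    (hconc : ∀ x : ℕ, V (x + 2) - V (x + 1) ≤ V (x + 1) - V x)
    (hslope : ∀ Δ₁ Δ₂ : ℕ, Δ₁ ≤ Δ₂ →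
      V Δ₂ - V Δ₁ ≥ ((L : ℝ) / (ε * p)) * ((Δ₂ : ℝ) - (Δ₁ : ℝ)))
    (Δ₁ Δ₂ : ℕ) (h12 : Δ₁ ≤ Δ₂)
    (hopt1 : V Δ₁ = Q Δ₁) (hle2 : V Δ₂ ≤ Q Δ₂) :
    V Δ₂ = Q Δ₂ := by
  have hgap := antitone_sub_of_slope_of_concave V L hL p ε hp0 hp1 hε0 r Q hQ hconc hslope h12
  simp only at hgap
  linarith

/-- Threshold structure: if action `a` is optimal at `Δ₁` (i.e. `V Δ₁ = Q Δ₁`) and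
`V ≤ Q` at `Δ₂ ≥ Δ₁`, then `a` remains optimal at `Δ₂`. -/
theorem threshold_structure (V : ℕ → ℝ) (L : ℕ) (hL : 0 < L)
    (p ε : ℝ) (hp0 : 0 < p) (hp1 : p ≤ 1) (hε0 : 0 < ε) (hεL : ε ≤ (L : ℝ)) (r : ℕ)
    (Q : ℕ → ℝ)
    (hQ : ∀ Δ : ℕ, Q Δ = (Δ : ℝ) + ((L : ℝ) - 1) / 2 + (ε / L) * p * V r
          + (ε / L) * (1 - p) * V (Δ + L) + (1 - ε / L) * V Δ)
    (hconc : ∀ x : ℕ, V (x + 2) - V (x + 1) ≤ V (x + 1) - V x)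
    (hslope : ∀ Δ₁ Δ₂ : ℕ, Δ₁ ≤ Δ₂ →
      V Δ₂ - V Δ₁ ≥ ((L : ℝ) / (ε * p)) * ((Δ₂ : ℝ) - (Δ₁ : ℝ)))
    (Δ₁ Δ₂ : ℕ) (h12 : Δ₁ ≤ Δ₂)
    (hopt1 : V Δ₁ = Q Δ₁) (hle2 : V Δ₂ ≤ Q Δ₂) :
    V Δ₂ = Q Δ₂ :=
  threshold_structure_general V L hL p ε hp0 hp1 hε0 r Q hQ hconc hslope Δ₁ Δ₂ h12 hopt1 hle2
end
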